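/- arXiv:1401.4750 — 4 statements merged into one kernel-verified Lean document; each statement's English description precedes it below -/
import Mathlib

section
/- Let M and L be positive integers with L < M. There exist L partitions (floor divisions) of {1,...,M}, indexed by t = 0,...,L-1, each into intervals (modulo M) of length at most L, together with a choice of at most one distinguished element (marginal row) in each block of each partition, such that: (i) within each partition, removing all marginal rows leaves blocks that are pairwise non-adjacent as subsets of {1,...,M} (no two remaining elements from distinct blocks differ by 1); and (ii) every element of {1,...,M} is a marginal row in exactly one of the L partitions. -/
/-- A cyclic interval (modulo `M`) of `{1,...,M}` of length at most `L`:
the image of `{0,...,k-1}` (for some `k ≤ L`) under `i ↦ (s + i) % M + 1`. -/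
def IsCyclicInterval (M L : ℕ) (B : Finset ℕ) : Prop :=
  ∃ s k : ℕ, k ≤ L ∧ B = (Finset.range k).image (fun i => (s + i) % M + 1)

/-!
Partition `t` cuts `{1,...,M}` just before each row `m ≡ t + 1 (mod L)`, so its blocks are the
fibres of `m ↦ (m + (L - 1 - t)) / L`: intervals of length at most `L`. The marginal rows of
partition `t` are the rows `m ≡ t + 1 (mod L)`. A block contains at most one of them, since they
are `L` apart, and whenever `x` and `x + 1` lie in different blocks, `x + 1` starts a block and so
is marginal. Every row `m` is marginal for exactly one shift, namely `t = (m - 1) % L`.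
-/

open Finset

namespace Finset

variable {α β : Type*} [DecidableEq α] [DecidableEq β]

def fibers (S : Finset α) (f : α → β) : Finset (Finset α) :=
  S.image fun a => S.filter (f · = f a)

variable {S : Finset α} {f : α → β} {B B' : Finset α} {x y : α}

theorem subset_of_mem_fibers (hB : B ∈ S.fibers f) : B ⊆ S := by
  obtain ⟨a, -, rfl⟩ := mem_image.1 hB
  exact filter_subset _ _

theorem apply_eq_of_mem_fibers (hB : B ∈ S.fibers f) (hx : x ∈ B) (hy : y ∈ B) :
    f x = f y := by
  obtain ⟨a, -, rfl⟩ := mem_image.1 hB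
  exact (mem_filter.1 hx).2.trans (mem_filter.1 hy).2.symm

theorem apply_ne_of_mem_fibers (hB : B ∈ S.fibers f) (hB' : B' ∈ S.fibers f) (hne : B ≠ B')
    (hx : x ∈ B) (hy : y ∈ B') : f x ≠ f y := by
  obtain ⟨a, -, rfl⟩ := mem_image.1 hB
  obtain ⟨b, -, rfl⟩ := mem_image.1 hB'
  intro hxy
  apply hne
  rw [← (mem_filter.1 hx).2, ← (mem_filter.1 hy).2, hxy]

theorem pairwiseDisjoint_fibers (S : Finset α) (f : α → β) :
    (S.fibers f : Set (Finset α)).PairwiseDisjoint id := by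
  rintro _ hB _ hB' hne
  exact disjoint_left.2 fun _ hx hy => apply_ne_of_mem_fibers hB hB' hne hx hy rfl

theorem biUnion_fibers (S : Finset α) (f : α → β) : (S.fibers f).biUnion id = S := by
  ext x
  simp only [mem_biUnion, id]
  exact ⟨fun ⟨_, hB, hx⟩ => subset_of_mem_fibers hB hx,
    fun hx => ⟨_, mem_image_of_mem _ hx, mem_filter.2 ⟨hx, rfl⟩⟩⟩

end Finset

namespace Nat

variable {L : ℕ}

theorem mod_eq_iff_dvd_add_sub {n t : ℕ} (ht : t < L) : n % L = t ↔ L ∣ n + (L - t) := by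
  have hL : L ≡ 0 [MOD L] := Nat.modEq_zero_iff_dvd.2 dvd_rfl
  calc n % L = t ↔ n ≡ t [MOD L] := by rw [Nat.ModEq, Nat.mod_eq_of_lt ht]
    _ ↔ n + (L - t) ≡ t + (L - t) [MOD L] :=
      ⟨fun h => h.add_right _, fun h => h.add_right_cancel' _⟩
    _ ↔ L ∣ n + (L - t) := by
      rw [Nat.add_sub_cancel' ht.le, ← Nat.modEq_zero_iff_dvd]
      exact ⟨fun h => h.trans hL, fun h => h.trans hL.symm⟩

theorem dvd_succ_of_div_ne_succ_div {a : ℕ} (h : a / L ≠ (a + 1) / L) : L ∣ a + 1 := by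
  by_contra hndvd
  exact h (Nat.succ_div_of_not_dvd hndvd).symm

theorem eq_of_div_eq_of_dvd {a b : ℕ} (h : a / L = b / L) (ha : L ∣ a) (hb : L ∣ b) :
    a = b := by
  rw [← Nat.div_mul_cancel ha, ← Nat.div_mul_cancel hb, h]

end Nat

theorem filter_Icc_div_eq {M L c q : ℕ} (hL : 0 < L) :
    (Icc 1 M).filter (fun x => (x + c) / L = q) =
      Icc (max 1 (q * L - c)) (min M (q * L + L - 1 - c)) := by
  ext x
  simp only [mem_filter, mem_Icc, Nat.div_eq_iff hL]
  omega

theorem isCyclicInterval_Icc {M L a b : ℕ} (ha : 1 ≤ a) (hb : b ≤ M) (hab : b + 1 - a ≤ L) :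
    IsCyclicInterval M L (Icc a b) := by
  refine ⟨a - 1, b + 1 - a, hab, ?_⟩
  ext x
  simp only [mem_Icc, mem_image, mem_range]
  constructor
  · rintro ⟨h1, h2⟩
    exact ⟨x - a, by omega, by rw [Nat.mod_eq_of_lt (by omega)]; omega⟩
  · rintro ⟨i, hi, rfl⟩
    rw [Nat.mod_eq_of_lt (by omega)]
    omega

section ShiftedPartitions

variable {M L t : ℕ}

/-- The index of the block of row `m` in the `t`-th partition; the blocks are `{1,...,t}` and
the intervals `{t + 1 + j L, ..., t + (j + 1) L}`. -/
def blockIndex (L t m : ℕ) : ℕ := (m + (L - 1 - t)) / L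

def shiftPartition (M L t : ℕ) : Finset (Finset ℕ) := (Icc 1 M).fibers (blockIndex L t)

def marginalRows (M L t : ℕ) : Finset ℕ := (Icc 1 M).filter fun m => (m - 1) % L = t

theorem mem_marginalRows_of_blockIndex_ne (ht : t < L) {x : ℕ} (hx : x + 1 ∈ Icc 1 M)
    (h : blockIndex L t x ≠ blockIndex L t (x + 1)) : x + 1 ∈ marginalRows M L t := by
  rw [blockIndex, blockIndex, Nat.add_right_comm] at h
  have hdvd : L ∣ x + (L - t) := by
    simpa only [show x + (L - 1 - t) + 1 = x + (L - t) by omega]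
      using Nat.dvd_succ_of_div_ne_succ_div h
  exact mem_filter.2 ⟨hx, (Nat.mod_eq_iff_dvd_add_sub ht).2 hdvd⟩

theorem eq_of_mem_marginalRows (ht : t < L) {x y : ℕ} (hx : x ∈ marginalRows M L t)
    (hy : y ∈ marginalRows M L t) (h : blockIndex L t x = blockIndex L t y) : x = y := by
  obtain ⟨hxM, hxt⟩ := mem_filter.1 hx
  obtain ⟨hyM, hyt⟩ := mem_filter.1 hy
  rw [mem_Icc] at hxM hyM
  have hxL := (Nat.mod_eq_iff_dvd_add_sub ht).1 hxt
  have hyL := (Nat.mod_eq_iff_dvd_add_sub ht).1 hyt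
  rw [show x - 1 + (L - t) = x + (L - 1 - t) by omega] at hxL
  rw [show y - 1 + (L - t) = y + (L - 1 - t) by omega] at hyL
  have := Nat.eq_of_div_eq_of_dvd h hxL hyL
  omega

theorem nonempty_card_le_isCyclicInterval_of_mem_shiftPartition (hL : 0 < L) {B : Finset ℕ}
    (hB : B ∈ shiftPartition M L t) :
    B.Nonempty ∧ B.card ≤ L ∧ IsCyclicInterval M L B := by
  obtain ⟨a, ha, rfl⟩ := mem_image.1 hB
  refine ⟨⟨a, mem_filter.2 ⟨ha, rfl⟩⟩, ?_⟩
  unfold blockIndex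
  rw [filter_Icc_div_eq hL, Nat.card_Icc]
  exact ⟨by omega, isCyclicInterval_Icc (by omega) (by omega) (by omega)⟩

theorem card_inter_marginalRows_le_one (ht : t < L) {B : Finset ℕ}
    (hB : B ∈ shiftPartition M L t) : (B ∩ marginalRows M L t).card ≤ 1 :=
  card_le_one.2 fun _ hx _ hy =>
    eq_of_mem_marginalRows ht (mem_inter.1 hx).2 (mem_inter.1 hy).2
      (apply_eq_of_mem_fibers hB (mem_inter.1 hx).1 (mem_inter.1 hy).1)

theorem succ_ne_of_mem_sdiff_marginalRows (ht : t < L) {B B' : Finset ℕ}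
    (hB : B ∈ shiftPartition M L t) (hB' : B' ∈ shiftPartition M L t) (hne : B ≠ B')
    {x y : ℕ} (hx : x ∈ B) (hy : y ∈ B' \ marginalRows M L t) : x + 1 ≠ y := by
  rintro rfl
  obtain ⟨hyB', hy⟩ := mem_sdiff.1 hy
  exact hy (mem_marginalRows_of_blockIndex_ne ht (subset_of_mem_fibers hB' hyB')
    (apply_ne_of_mem_fibers hB hB' hne hx hyB'))

theorem existsUnique_mem_marginalRows (hL : 0 < L) {m : ℕ} (hm : m ∈ Icc 1 M) :
    ∃! t : Fin L, m ∈ marginalRows M L t :=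
  ⟨⟨(m - 1) % L, Nat.mod_lt _ hL⟩, mem_filter.2 ⟨hm, rfl⟩,
    fun _ ht => Fin.ext (mem_filter.1 ht).2.symm⟩

end ShiftedPartitions

theorem stmt_1_general (M L : ℕ) (hL : 0 < L) :
    ∃ (P : Fin L → Finset (Finset ℕ)) (Marg : Fin L → Finset ℕ),
      (∀ t : Fin L,
        -- each `P t` is a partition of `{1,...,M}` into cyclic intervals of length ≤ L
        (∀ B ∈ P t, B.Nonempty ∧ B.card ≤ L ∧ IsCyclicInterval M L B) ∧
        ((P t : Set (Finset ℕ)).PairwiseDisjoint id) ∧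
        ((P t).biUnion id = Finset.Icc 1 M) ∧
        -- marginal rows: at most one distinguished element in each block
        Marg t ⊆ Finset.Icc 1 M ∧
        (∀ B ∈ P t, (B ∩ Marg t).card ≤ 1) ∧
        -- (i) after removing marginal rows, distinct blocks are non-adjacent
        (∀ B ∈ P t, ∀ B' ∈ P t, B ≠ B' →
          ∀ x ∈ B \ Marg t, ∀ y ∈ B' \ Marg t, x + 1 ≠ y ∧ y + 1 ≠ x)) ∧
      -- (ii) every element of `{1,...,M}` is a marginal row in exactly one partition
      (∀ m ∈ Finset.Icc 1 M, ∃! t : Fin L, m ∈ Marg t) := by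
  refine ⟨fun t => shiftPartition M L t, fun t => marginalRows M L t, fun t => ?_,
    fun m hm => existsUnique_mem_marginalRows hL hm⟩
  refine ⟨fun B hB => nonempty_card_le_isCyclicInterval_of_mem_shiftPartition hL hB,
    pairwiseDisjoint_fibers _ _, biUnion_fibers _ _, filter_subset _ _,
    fun B hB => card_inter_marginalRows_le_one t.isLt hB,
    fun B hB B' hB' hne x hx y hy => ⟨?_, ?_⟩⟩
  · exact succ_ne_of_mem_sdiff_marginalRows t.isLt hB hB' hne (mem_sdiff.1 hx).1 hy
  · exact succ_ne_of_mem_sdiff_marginalRows t.isLt hB' hB hne.symm (mem_sdiff.1 hy).1 hx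

theorem stmt_1 (M L : ℕ) (hM : 0 < M) (hL : 0 < L) (hLM : L < M) :
    ∃ (P : Fin L → Finset (Finset ℕ)) (Marg : Fin L → Finset ℕ),
      (∀ t : Fin L,
        -- each `P t` is a partition of `{1,...,M}` into cyclic intervals of length ≤ L
        (∀ B ∈ P t, B.Nonempty ∧ B.card ≤ L ∧ IsCyclicInterval M L B) ∧
        ((P t : Set (Finset ℕ)).PairwiseDisjoint id) ∧
        ((P t).biUnion id = Finset.Icc 1 M) ∧
        -- marginal rows: at most one distinguished element in each block
        Marg t ⊆ Finset.Icc 1 M ∧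
        (∀ B ∈ P t, (B ∩ Marg t).card ≤ 1) ∧
        -- (i) after removing marginal rows, distinct blocks are non-adjacent
        (∀ B ∈ P t, ∀ B' ∈ P t, B ≠ B' →
          ∀ x ∈ B \ Marg t, ∀ y ∈ B' \ Marg t, x + 1 ≠ y ∧ y + 1 ≠ x)) ∧
      -- (ii) every element of `{1,...,M}` is a marginal row in exactly one partition
      (∀ m ∈ Finset.Icc 1 M, ∃! t : Fin L, m ∈ Marg t) :=
  stmt_1_general M L hL
end

section
/- Let G = (V, E) be a finite graph with positive vertex weights u : V → ℝ_{>0}, and let {F_t}_{t=0}^{L-1} be a family of subsets of V such that every vertex belongs to exactly L-1 of the sets F_t. Suppose for each t there is an independent set S_t of G with ∑_{v ∈ S_t} u(v) ≥ ∑_{v ∈ S* ∩ F_t} u(v), where S* is a maximum-weight independent set of G. Then max_t ∑_{v ∈ S_t} u(v) ≥ ((L-1)/L) · ∑_{v ∈ S*} u(v). -/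
/-- A set of vertices is independent: no two of its vertices are adjacent. -/
def IsIndepSet {V : Type*} (G : SimpleGraph V) (S : Set V) : Prop :=
  S.Pairwise fun v w => ¬ G.Adj v w

theorem stmt_5 {V : Type*} [Fintype V] [DecidableEq V] (G : SimpleGraph V)
    (u : V → ℝ) (hu : ∀ v, 0 < u v)
    (L : ℕ) (hL : 0 < L) (F : Fin L → Finset V)
    -- every vertex belongs to exactly L-1 of the sets F t
    (hF : ∀ v : V, (Finset.univ.filter (fun t : Fin L => v ∈ F t)).card = L - 1)
    (Sstar : Finset V) (hSstar : IsIndepSet G (Sstar : Set V))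
    -- S* is a maximum-weight independent set
    (hmax : ∀ S : Finset V, IsIndepSet G (S : Set V) →
      ∑ v ∈ S, u v ≤ ∑ v ∈ Sstar, u v)
    (S : Fin L → Finset V) (hSind : ∀ t, IsIndepSet G ((S t : Set V)))
    (hSt : ∀ t, ∑ v ∈ S t, u v ≥ ∑ v ∈ Sstar ∩ F t, u v) :
    Finset.univ.sup' ⟨⟨0, hL⟩, Finset.mem_univ _⟩ (fun t => ∑ v ∈ S t, u v) ≥
      (((L : ℝ) - 1) / L) * ∑ v ∈ Sstar, u v := by
  set M := Finset.univ.sup' ⟨⟨0, hL⟩, Finset.mem_univ _⟩ (fun t => ∑ v ∈ S t, u v) with hM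
  have hLpos : (0:ℝ) < L := by exact_mod_cast hL
  have key : ∑ t : Fin L, ∑ v ∈ Sstar ∩ F t, u v
      = ((L:ℝ) - 1) * ∑ v ∈ Sstar, u v := by
    have : ∑ t : Fin L, ∑ v ∈ Sstar ∩ F t, u v
        = ∑ v ∈ Sstar, ((Finset.univ.filter (fun t : Fin L => v ∈ F t)).card : ℝ) * u v := by
      have h1 : ∀ t : Fin L, ∑ v ∈ Sstar ∩ F t, u v
          = ∑ v ∈ Sstar, if v ∈ F t then u v else 0 := by
        intro t
        rw [← Finset.filter_mem_eq_inter, Finset.sum_filter]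
      simp only [h1]
      rw [Finset.sum_comm]
      refine Finset.sum_congr rfl fun v _ => ?_
      rw [← Finset.sum_filter]
      simp [mul_comm]
    rw [this, Finset.mul_sum]
    refine Finset.sum_congr rfl fun v _ => ?_
    rw [hF v]
    have : ((L - 1 : ℕ) : ℝ) = (L:ℝ) - 1 := by
      have := hL
      push_cast [Nat.cast_sub hL]
      ring
    rw [this]
  have hsum : ((L:ℝ) - 1) * ∑ v ∈ Sstar, u v ≤ (L:ℝ) * M := by
    rw [← key]
    calc ∑ t : Fin L, ∑ v ∈ Sstar ∩ F t, u v
        ≤ ∑ t : Fin L, ∑ v ∈ S t, u v := Finset.sum_le_sum fun t _ => hSt t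
      _ ≤ ∑ _t : Fin L, M := Finset.sum_le_sum fun t _ =>
          Finset.le_sup' (fun t => ∑ v ∈ S t, u v) (Finset.mem_univ t)
      _ = (L:ℝ) * M := by simp [mul_comm]
  rw [ge_iff_le, div_mul_eq_mul_div, div_le_iff₀ hLpos, mul_comm M]
  exact hsum
end

section
/- Combining the two previous facts: if G̃ is obtained from G by deleting a set D of edges, and f̄*(G) denotes the optimal (unweighted) reuse ratio of G, then applying validity check to an optimal multi-coloring of G̃ yields a valid multi-coloring 𝒞' of G with f̄(𝒞') ≥ f̄*(G) − |D|/|V|. -/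
/-- A multi-coloring `𝒞 : V → Finset C` is valid if adjacent vertices share no color. -/
def ValidMC {V C : Type*} (G : SimpleGraph V) (𝒞 : V → Finset C) : Prop :=
  ∀ v₁ v₂, G.Adj v₁ v₂ → ∀ c, ¬ (c ∈ 𝒞 v₁ ∧ c ∈ 𝒞 v₂)

/-- The unweighted reuse ratio of a multi-coloring. -/
noncomputable def reuseRatio {V C : Type*} [Fintype V] [Fintype C]
    (𝒞 : V → Finset C) : ℝ :=
  (1 / ((Fintype.card C : ℝ) * (Fintype.card V : ℝ))) * ∑ v, ((𝒞 v).card : ℝ)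

/-!
Fix an injective ranking `f` of the vertices. The validity check removes from each vertex `v`
every color of a lower-ranked vertex joined to `v` by a deleted edge. Every deleted edge then has
an endpoint that gave up the colors it shared with the other, so the result is valid for `G`; and
each deleted edge costs at most `|C|` color incidences, at its higher-ranked endpoint. Since every
valid multi-coloring of `G` is valid for `G̃`, the optimum of `G̃` dominates `f̄*(G)`.
-/

open Finset

namespace ValidMC

variable {V C : Type*} {G G' : SimpleGraph V} {𝒞 : V → Finset C}

theorem mono (hle : G' ≤ G) (h𝒞 : ValidMC G 𝒞) : ValidMC G' 𝒞 :=
  fun v₁ v₂ hadj => h𝒞 v₁ v₂ (hle hadj)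

end ValidMC

section ValidityCheck

variable {V C α : Type*} [Fintype V] [LinearOrder α] (H : SimpleGraph V) [DecidableRel H.Adj]
  (f : V → α)

def lowerNeighborFinset (v : V) : Finset V :=
  (H.neighborFinset v).filter fun w => f w < f v

variable {H f}

theorem mem_lowerNeighborFinset {v w : V} :
    w ∈ lowerNeighborFinset H f v ↔ H.Adj v w ∧ f w < f v := by
  simp [lowerNeighborFinset]

theorem sum_card_lowerNeighborFinset_le [Fintype H.edgeSet] :
    ∑ v, (lowerNeighborFinset H f v).card ≤ H.edgeFinset.card := by
  rw [← card_sigma]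
  refine card_le_card_of_injOn (fun p => s(p.1, p.2)) (fun p hp => ?_) fun p hp q hq hpq => ?_
  · simpa using (mem_lowerNeighborFinset.1 (mem_sigma.1 hp).2).1
  · have hp' := (mem_lowerNeighborFinset.1 (mem_sigma.1 hp).2).2
    have hq' := (mem_lowerNeighborFinset.1 (mem_sigma.1 hq).2).2
    rcases Sym2.eq_iff.1 hpq with ⟨h₁, h₂⟩ | ⟨h₁, h₂⟩
    · exact Sigma.ext h₁ (heq_of_eq h₂)
    · rw [h₁, h₂] at hp'
      exact absurd (hp'.trans hq') (lt_irrefl _)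

variable (H f) [DecidableEq C]

/-- `H` is the graph of deleted edges. -/
def validityCheck (𝒞 : V → Finset C) (v : V) : Finset C :=
  𝒞 v \ (lowerNeighborFinset H f v).biUnion 𝒞

variable {H f}

theorem validMC_validityCheck {G G' : SimpleGraph V} {𝒞 : V → Finset C} (hf : f.Injective)
    (hG : G ≤ G' ⊔ H) (h𝒞 : ValidMC G' 𝒞) : ValidMC G (validityCheck H f 𝒞) := by
  intro v w hadj c ⟨hcv, hcw⟩
  simp only [validityCheck, mem_sdiff, mem_biUnion, mem_lowerNeighborFinset, not_exists,
    not_and] at hcv hcw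
  rcases hG hadj with hG' | hH
  · exact h𝒞 v w hG' c ⟨hcv.1, hcw.1⟩
  · rcases (hf.ne (H.ne_of_adj hH)).lt_or_gt with hlt | hlt
    · exact hcw.2 v ⟨hH.symm, hlt⟩ hcv.1
    · exact hcv.2 w ⟨hH, hlt⟩ hcw.1

theorem card_le_card_validityCheck_add [Fintype C] (𝒞 : V → Finset C) (v : V) :
    (𝒞 v).card ≤ (validityCheck H f 𝒞 v).card +
      (lowerNeighborFinset H f v).card * Fintype.card C :=
  calc (𝒞 v).card
      ≤ (validityCheck H f 𝒞 v).card + ((lowerNeighborFinset H f v).biUnion 𝒞).card :=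
        card_le_card_sdiff_add_card
    _ ≤ _ := by
        gcongr
        calc _ ≤ ∑ w ∈ lowerNeighborFinset H f v, (𝒞 w).card := card_biUnion_le
          _ ≤ ∑ _w ∈ lowerNeighborFinset H f v, Fintype.card C :=
              sum_le_sum fun w _ => card_le_univ _
          _ = _ := by rw [sum_const, smul_eq_mul]

theorem sum_card_le_sum_card_validityCheck_add [Fintype H.edgeSet] [Fintype C]
    (𝒞 : V → Finset C) :
    ∑ v, (𝒞 v).card ≤ ∑ v, (validityCheck H f 𝒞 v).card + H.edgeFinset.card * Fintype.card C :=
  calc ∑ v, (𝒞 v).card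
      ≤ ∑ v, ((validityCheck H f 𝒞 v).card + (lowerNeighborFinset H f v).card * Fintype.card C) :=
        sum_le_sum fun v _ => card_le_card_validityCheck_add 𝒞 v
    _ = ∑ v, (validityCheck H f 𝒞 v).card +
          (∑ v, (lowerNeighborFinset H f v).card) * Fintype.card C := by
        rw [sum_add_distrib, sum_mul]
    _ ≤ _ := by gcongr; exact sum_card_lowerNeighborFinset_le

end ValidityCheck

theorem reuseRatio_le_add_of_sum_card_le {V C : Type*} [Fintype V] [Fintype C]
    {𝒞 𝒞' : V → Finset C} {k : ℕ}
    (h : ∑ v, (𝒞 v).card ≤ ∑ v, (𝒞' v).card + k * Fintype.card C) :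
    reuseRatio 𝒞 ≤ reuseRatio 𝒞' + k / Fintype.card V := by
  rcases (Fintype.card C).eq_zero_or_pos with hC | hC
  · simp only [reuseRatio, hC, CharP.cast_eq_zero, zero_mul, div_zero, zero_add]
    positivity
  have h' : (∑ v, ((𝒞 v).card : ℝ)) ≤ ∑ v, ((𝒞' v).card : ℝ) + k * Fintype.card C := by
    exact_mod_cast h
  have hC' : (0 : ℝ) < Fintype.card C := by exact_mod_cast hC
  calc reuseRatio 𝒞
      ≤ 1 / ((Fintype.card C : ℝ) * Fintype.card V) *
          (∑ v, ((𝒞' v).card : ℝ) + k * Fintype.card C) := by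
        unfold reuseRatio; gcongr
    _ = reuseRatio 𝒞' + k / Fintype.card V := by
        unfold reuseRatio; field_simp

theorem stmt_9_general {V C : Type*} [Fintype V] [Fintype C] [DecidableEq V]
    (G G' : SimpleGraph V) [DecidableRel G.Adj] [DecidableRel G'.Adj]
    (hle : G' ≤ G)  -- G̃ obtained from G by deleting the edge set D
    (fstarG : ℝ)
    (hfstarG : IsGreatest
      {x : ℝ | ∃ 𝒞 : V → Finset C, ValidMC G 𝒞 ∧ x = reuseRatio 𝒞} fstarG)
    -- an optimal multi-coloring of G̃
    (𝒞 : V → Finset C) (h𝒞 : ValidMC G' 𝒞)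
    (hopt : IsGreatest
      {x : ℝ | ∃ 𝒟 : V → Finset C, ValidMC G' 𝒟 ∧ x = reuseRatio 𝒟} (reuseRatio 𝒞)) :
    ∃ 𝒞' : V → Finset C,
      (∀ v, 𝒞' v ⊆ 𝒞 v) ∧
      ValidMC G 𝒞' ∧
      reuseRatio 𝒞' ≥ fstarG -
        ((G.edgeFinset \ G'.edgeFinset).card : ℝ) / (Fintype.card V : ℝ) := by
  classical
  obtain ⟨𝒟, h𝒟, rfl⟩ := hfstarG.1
  have hfstar : reuseRatio 𝒟 ≤ reuseRatio 𝒞 := hopt.2 ⟨𝒟, h𝒟.mono hle, rfl⟩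
  let f := Fintype.equivFin V
  refine ⟨validityCheck (G \ G') f 𝒞, fun v => sdiff_subset,
    validMC_validityCheck f.injective le_sup_sdiff h𝒞, ?_⟩
  have hloss := reuseRatio_le_add_of_sum_card_le
    (sum_card_le_sum_card_validityCheck_add (H := G \ G') (f := f) 𝒞)
  rw [SimpleGraph.edgeFinset_sdiff] at hloss
  linarith

theorem stmt_9 {V C : Type*} [Fintype V] [Fintype C] [DecidableEq V] [DecidableEq C]
    (G G' : SimpleGraph V) [DecidableRel G.Adj] [DecidableRel G'.Adj]
    (hle : G' ≤ G)  -- G̃ obtained from G by deleting the edge set D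
    (fstarG : ℝ)
    (hfstarG : IsGreatest
      {x : ℝ | ∃ 𝒞 : V → Finset C, ValidMC G 𝒞 ∧ x = reuseRatio 𝒞} fstarG)
    -- an optimal multi-coloring of G̃
    (𝒞 : V → Finset C) (h𝒞 : ValidMC G' 𝒞)
    (hopt : IsGreatest
      {x : ℝ | ∃ 𝒟 : V → Finset C, ValidMC G' 𝒟 ∧ x = reuseRatio 𝒟} (reuseRatio 𝒞)) :
    ∃ 𝒞' : V → Finset C,
      (∀ v, 𝒞' v ⊆ 𝒞 v) ∧
      ValidMC G 𝒞' ∧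
      reuseRatio 𝒞' ≥ fstarG -
        ((G.edgeFinset \ G'.edgeFinset).card : ℝ) / (Fintype.card V : ℝ) :=
  stmt_9_general G G' hle fstarG hfstarG 𝒞 h𝒞 hopt
end

section
/- Consider the matrix graph G with vertex set ⋃_{m,n} V_{m,n}, where each cell G[V_{m,n}] is a complete graph on l vertices labeled by Wang tiles w_1,...,w_l, and inter-cell edges connect v_{m,n}^i to v_{m+1,n}^j iff the east edge of w_i mismatches the west edge of w_j, and v_{m,n}^i to v_{m,n+1}^j iff the south edge of w_i mismatches the north edge of w_j. Then G has an independent set of size MN (equivalently, exactly one vertex per cell) if and only if the tile set admits a valid tiling of the M-by-N square. -/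
theorem stmt_16 {Color : Type*} (l M N : ℕ) (hl : 0 < l) (hM : 0 < M) (hN : 0 < N)
    (north east south west : Fin l → Color)
    (G : SimpleGraph (Fin M × Fin N × Fin l))
    -- each cell is a complete graph on the l tiles; inter-cell edges record mismatches
    (hAdj : ∀ (m p : Fin M) (n q : Fin N) (i j : Fin l),
      G.Adj (m, n, i) (p, q, j) ↔
        ((m, n, i) ≠ (p, q, j) ∧
          ((m = p ∧ n = q) ∨
           ((p : ℕ) = (m : ℕ) + 1 ∧ n = q ∧ east i ≠ west j) ∨
           ((m : ℕ) = (p : ℕ) + 1 ∧ n = q ∧ east j ≠ west i) ∨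
           ((q : ℕ) = (n : ℕ) + 1 ∧ m = p ∧ south i ≠ north j) ∨
           ((n : ℕ) = (q : ℕ) + 1 ∧ m = p ∧ south j ≠ north i)))) :
    (∃ S : Finset (Fin M × Fin N × Fin l),
        IsIndepSet G (S : Set (Fin M × Fin N × Fin l)) ∧ S.card = M * N) ↔
    (∃ T : Fin M × Fin N → Fin l,
        (∀ (m : Fin M) (n : Fin N) (h : (m : ℕ) + 1 < M),
          east (T (m, n)) = west (T (⟨(m : ℕ) + 1, h⟩, n))) ∧
        (∀ (m : Fin M) (n : Fin N) (h : (n : ℕ) + 1 < N),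
          south (T (m, n)) = north (T (m, ⟨(n : ℕ) + 1, h⟩)))) := by
  constructor
  · rintro ⟨S, hind, hcard⟩
    -- projection to cell is injective on S
    have hproj : Set.InjOn (fun v : Fin M × Fin N × Fin l => (v.1, v.2.1)) ↑S := by
      rintro ⟨m, n, i⟩ hv ⟨p, q, j⟩ hw hvw
      by_contra hne
      apply hind hv hw hne
      rw [hAdj]
      simp only [Prod.mk.injEq] at hvw
      exact ⟨hne, Or.inl ⟨hvw.1, hvw.2⟩⟩
    have himg : S.image (fun v : Fin M × Fin N × Fin l => (v.1, v.2.1)) = Finset.univ := by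
      apply Finset.eq_univ_of_card
      rw [Finset.card_image_of_injOn hproj, hcard]
      simp [Fintype.card_prod]
    have hex : ∀ p : Fin M × Fin N, ∃ i : Fin l, (p.1, p.2, i) ∈ S := by
      intro p
      have : p ∈ S.image (fun v : Fin M × Fin N × Fin l => (v.1, v.2.1)) := by
        rw [himg]; exact Finset.mem_univ p
      obtain ⟨⟨m, n, i⟩, hv, hvp⟩ := Finset.mem_image.mp this
      exact ⟨i, by subst hvp; exact hv⟩
    choose T hT using hex
    refine ⟨T, ?_, ?_⟩
    · intro m n h
      by_contra hne
      have h1 : ((m, n, T (m, n)) : Fin M × Fin N × Fin l) ∈ (S : Set _) := hT (m, n)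
      have h2 : ((⟨(m : ℕ) + 1, h⟩, n, T (⟨(m : ℕ) + 1, h⟩, n)) : Fin M × Fin N × Fin l)
          ∈ (S : Set _) := hT (⟨(m : ℕ) + 1, h⟩, n)
      have hne' : ((m, n, T (m, n)) : Fin M × Fin N × Fin l)
          ≠ (⟨(m : ℕ) + 1, h⟩, n, T (⟨(m : ℕ) + 1, h⟩, n)) := by
        intro he
        have := congrArg (fun v : Fin M × Fin N × Fin l => (v.1 : ℕ)) he
        simp at this
      apply hind h1 h2 hne'
      rw [hAdj]
      exact ⟨hne', Or.inr (Or.inl ⟨rfl, rfl, hne⟩)⟩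
    · intro m n h
      by_contra hne
      have h1 : ((m, n, T (m, n)) : Fin M × Fin N × Fin l) ∈ (S : Set _) := hT (m, n)
      have h2 : ((m, ⟨(n : ℕ) + 1, h⟩, T (m, ⟨(n : ℕ) + 1, h⟩)) : Fin M × Fin N × Fin l)
          ∈ (S : Set _) := hT (m, ⟨(n : ℕ) + 1, h⟩)
      have hne' : ((m, n, T (m, n)) : Fin M × Fin N × Fin l)
          ≠ (m, ⟨(n : ℕ) + 1, h⟩, T (m, ⟨(n : ℕ) + 1, h⟩)) := by
        intro he
        have := congrArg (fun v : Fin M × Fin N × Fin l => (v.2.1 : ℕ)) he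
        simp at this
      apply hind h1 h2 hne'
      rw [hAdj]
      exact ⟨hne', Or.inr (Or.inr (Or.inr (Or.inl ⟨rfl, rfl, hne⟩)))⟩
  · rintro ⟨T, hE, hS⟩
    refine ⟨Finset.univ.image (fun p : Fin M × Fin N => (p.1, p.2, T p)), ?_, ?_⟩
    · rintro v hv w hw hvw hadj
      simp only [Finset.coe_image, Set.mem_image] at hv hw
      obtain ⟨⟨m, n⟩, -, rfl⟩ := hv
      obtain ⟨⟨p, q⟩, -, rfl⟩ := hw
      rw [hAdj] at hadj
      obtain ⟨-, hc⟩ := hadj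
      rcases hc with ⟨h1, h2⟩ | ⟨h1, h2, h3⟩ | ⟨h1, h2, h3⟩ | ⟨h1, h2, h3⟩ | ⟨h1, h2, h3⟩
      · exact hvw (by subst h1 h2; rfl)
      · dsimp only at h1 h2
        subst h2
        have hlt : (m : ℕ) + 1 < M := h1 ▸ p.isLt
        have hp : p = ⟨(m : ℕ) + 1, hlt⟩ := Fin.ext h1
        subst hp
        exact h3 (hE m n hlt)
      · dsimp only at h1 h2
        subst h2
        have hlt : (p : ℕ) + 1 < M := h1 ▸ m.isLt
        have hm : m = ⟨(p : ℕ) + 1, hlt⟩ := Fin.ext h1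
        subst hm
        exact h3 (hE p n hlt)
      · dsimp only at h1 h2
        subst h2
        have hlt : (n : ℕ) + 1 < N := h1 ▸ q.isLt
        have hq : q = ⟨(n : ℕ) + 1, hlt⟩ := Fin.ext h1
        subst hq
        exact h3 (hS m n hlt)
      · dsimp only at h1 h2
        subst h2
        have hlt : (q : ℕ) + 1 < N := h1 ▸ n.isLt
        have hn : n = ⟨(q : ℕ) + 1, hlt⟩ := Fin.ext h1
        subst hn
        exact h3 (hS m q hlt)
    · rw [Finset.card_image_of_injective _ (fun a b hab => by
        simpa [Prod.ext_iff] using And.intro (congrArg Prod.fst hab)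
          (congrArg (fun v : Fin M × Fin N × Fin l => v.2.1) hab))]
      simp [Fintype.card_prod]
end
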